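/- arXiv:2207.12979 — 9 statements merged into one kernel-verified Lean document; each statement's English description precedes it below -/
import Mathlib

section
/- Let a, η : ℝ → ℝ with a C¹, and let q satisfy q' = η'·a'. Define for u⁻ ≠ u⁺ the entropy cost c_η(u⁺,u⁻) := q(u⁺) − q(u⁻) − ((a(u⁺) − a(u⁻))/(u⁺ − u⁻))·(η(u⁺) − η(u⁻)). Then c_η(u⁺,u⁻) = (1/(u⁺ − u⁻)) ∫_{u⁻}^{u⁺} η'(t) ∫_{u⁻}^{u⁺} (a'(t) − a'(s)) ds dt. -/
open MeasureTheory intervalIntegral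

/- Integrating the inner integral first gives `(u⁺ - u⁻) a'(t) - (a(u⁺) - a(u⁻))`, so the right-hand
side is `(u⁺ - u⁻) ∫ η' a' - (a(u⁺) - a(u⁻)) ∫ η'`; by the fundamental theorem of calculus
`∫ η' a' = q(u⁺) - q(u⁻)` and `∫ η' = η(u⁺) - η(u⁻)`. -/

theorem intervalIntegral.integral_mul_integral_sub {f g : ℝ → ℝ} {a b : ℝ}
    (hf : IntervalIntegrable f volume a b) (hg : IntervalIntegrable g volume a b)
    (hfg : IntervalIntegrable (fun t => f t * g t) volume a b) :
    ∫ t in a..b, f t * ∫ s in a..b, (g t - g s)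
      = (b - a) * (∫ t in a..b, f t * g t) - (∫ s in a..b, g s) * ∫ t in a..b, f t := by
  have inner (t : ℝ) :
      f t * ∫ s in a..b, (g t - g s)
        = (b - a) * (f t * g t) - (∫ s in a..b, g s) * f t := by
    rw [integral_sub intervalIntegrable_const hg, integral_const, smul_eq_mul]
    ring
  simp only [inner]
  rw [integral_sub (hfg.const_mul _) (hf.const_mul _), integral_const_mul, integral_const_mul]

theorem ContDiff.integral_deriv_eq_sub {f : ℝ → ℝ} (hf : ContDiff ℝ 1 f) (a b : ℝ) :
    ∫ t in a..b, deriv f t = f b - f a :=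
  intervalIntegral.integral_deriv_eq_sub (fun x _ => hf.differentiable one_ne_zero x)
    ((hf.continuous_deriv le_rfl).intervalIntegrable _ _)

/-- Entropy cost identity: with `q' = η'·a'` and `u⁻ < u⁺`,
`c_η(u⁺,u⁻) = (1/(u⁺−u⁻)) ∫_{u⁻}^{u⁺} η'(t) ∫_{u⁻}^{u⁺} (a'(t)−a'(s)) ds dt`. -/
theorem stmt2 (a η q : ℝ → ℝ) (ha : ContDiff ℝ 1 a) (hη : ContDiff ℝ 1 η)
    (hq : ∀ v, HasDerivAt q (deriv η v * deriv a v) v)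
    (um up : ℝ) (h : um < up) :
    q up - q um - ((a up - a um) / (up - um)) * (η up - η um)
      = (1 / (up - um)) *
        ∫ t in um..up, deriv η t * ∫ s in um..up, (deriv a t - deriv a s) := by
  have ha' : Continuous (deriv a) := ha.continuous_deriv le_rfl
  have hη' : Continuous (deriv η) := hη.continuous_deriv le_rfl
  have hq_integral : ∫ t in um..up, deriv η t * deriv a t = q up - q um :=
    integral_eq_sub_of_hasDerivAt (fun t _ => hq t) ((hη'.mul ha').intervalIntegrable _ _)
  rw [integral_mul_integral_sub (hη'.intervalIntegrable _ _) (ha'.intervalIntegrable _ _)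
      ((hη'.mul ha').intervalIntegrable _ _), hq_integral, ha.integral_deriv_eq_sub,
    hη.integral_deriv_eq_sub]
  have : up - um ≠ 0 := sub_ne_zero.mpr h.ne'
  field_simp
end

section
/- Let a : ℝ → ℝ be C¹ with a' nondecreasing, η : ℝ → ℝ of class C², and q with q' = η'·a'. For any u⁻ < u⁺, |q(u⁺) − q(u⁻) − ((a(u⁺) − a(u⁻))/(u⁺ − u⁻))·(η(u⁺) − η(u⁻))| ≤ (1/2)·(sup over [u⁻,u⁺] of |η''|)·∫_{[u⁻,u⁺]} (u⁺ − s)(s − u⁻) da''(s). -/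
/-!
Write `σ` for the slope of the chord of `a` over `[u⁻, u⁺]` and `h ≥ 0` for the gap between that
chord and the convex function `a`. Since `q' - σ η' = η' (a' - σ) = -η' h'` and `h` vanishes at both
ends, integrating by parts gives `q(u⁺) - q(u⁻) - σ (η(u⁺) - η(u⁻)) = ∫ η'' h`, whose absolute value
is at most `sup |η''| · ∫ h`. Finally `∫ h` is the trapezoid-rule error of `a`, and by Fubini
against the Stieltjes measure of `a'` it equals `½ ∫ (u⁺ - s)(s - u⁻) da''(s)`.
-/

open MeasureTheory intervalIntegral Set Function

theorem integral_two_mul_sub_sub (um up s : ℝ) :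
    ∫ t in s..up, (2 * t - um - up) = (up - s) * (s - um) := by
  rw [intervalIntegral.integral_sub, intervalIntegral.integral_sub,
    intervalIntegral.integral_const_mul, integral_id]
  · simp only [intervalIntegral.integral_const, smul_eq_mul]
    ring
  all_goals exact Continuous.intervalIntegrable (by fun_prop) _ _

namespace StieltjesFunction

variable (A : StieltjesFunction ℝ) {um up : ℝ}

theorem setIntegral_Icc_integral_eq {f : ℝ → ℝ} (h : um ≤ up)
    (hf : IntervalIntegrable f volume um up) :
    ∫ s in Icc um up, (∫ t in s..up, f t) ∂A.measure
      = ∫ t in um..up, f t * (A t - leftLim A um) := by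
  set μ := A.measure.restrict (Icc um up)
  set ν := volume.restrict (Icc um up)
  have : IsFiniteMeasure μ :=
    isFiniteMeasure_restrict.2 (by rw [A.measure_Icc]; exact ENNReal.ofReal_ne_top)
  set F : ℝ × ℝ → ℝ := {p | p.1 ≤ p.2}.indicator (fun p => f p.2)
  have hfν : Integrable f ν := (intervalIntegrable_iff_integrableOn_Icc_of_le h).1 hf
  have hF : Integrable F (μ.prod ν) :=
    (hfν.comp_snd μ).indicator (measurableSet_le measurable_fst measurable_snd)
  have inner_t : ∀ s ∈ Icc um up, ∫ t, F (s, t) ∂ν = ∫ t in s..up, f t := by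
    intro s hs
    have : (fun t => F (s, t)) = (Ici s).indicator f := rfl
    have hset : Ici s ∩ Icc um up = Icc s up := by
      ext x
      simp only [mem_inter_iff, mem_Ici, mem_Icc]
      exact ⟨fun ⟨h1, _, h3⟩ => ⟨h1, h3⟩, fun ⟨h1, h3⟩ => ⟨h1, hs.1.trans h1, h3⟩⟩
    rw [this, MeasureTheory.integral_indicator measurableSet_Ici,
      Measure.restrict_restrict measurableSet_Ici, hset, integral_Icc_eq_integral_Ioc,
      integral_of_le hs.2]
  have inner_s : ∀ t ∈ Icc um up, ∫ s, F (s, t) ∂μ = f t * (A t - leftLim A um) := by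
    intro t ht
    have : (fun s => F (s, t)) = (Iic t).indicator (fun _ => f t) := rfl
    have hset : Iic t ∩ Icc um up = Icc um t := by
      ext x
      simp only [mem_inter_iff, mem_Iic, mem_Icc]
      exact ⟨fun ⟨h1, h2, _⟩ => ⟨h2, h1⟩, fun ⟨h1, h2⟩ => ⟨h2, h1, h2.trans ht.2⟩⟩
    rw [this, integral_indicator_const _ measurableSet_Iic, measureReal_def,
      Measure.restrict_apply measurableSet_Iic, hset, A.measure_Icc,
      ENNReal.toReal_ofReal (sub_nonneg.2 (A.mono.leftLim_le ht.1)), smul_eq_mul, mul_comm]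
  calc ∫ s in Icc um up, (∫ t in s..up, f t) ∂A.measure
      = ∫ s, (∫ t, F (s, t) ∂ν) ∂μ := (setIntegral_congr_fun measurableSet_Icc inner_t).symm
    _ = ∫ t, (∫ s, F (s, t) ∂μ) ∂ν := integral_integral_swap hF
    _ = ∫ t in Icc um up, f t * (A t - leftLim A um) :=
      setIntegral_congr_fun measurableSet_Icc inner_s
    _ = ∫ t in um..up, f t * (A t - leftLim A um) := by
      rw [integral_Icc_eq_integral_Ioc, integral_of_le h]

theorem setIntegral_Icc_sub_mul_sub (h : um ≤ up) :
    ∫ s in Icc um up, (up - s) * (s - um) ∂A.measure = ∫ t in um..up, (2 * t - um - up) * A t := by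
  have hf : IntervalIntegrable (fun t => 2 * t - um - up) volume um up :=
    Continuous.intervalIntegrable (by fun_prop) _ _
  have hfA : IntervalIntegrable (fun t => (2 * t - um - up) * A t) volume um up :=
    A.mono.intervalIntegrable.continuousOn_mul (by fun_prop)
  simp_rw [← integral_two_mul_sub_sub um up]
  rw [A.setIntegral_Icc_integral_eq h hf]
  simp_rw [mul_sub]
  rw [intervalIntegral.integral_sub hfA (hf.mul_const _), intervalIntegral.integral_mul_const,
    integral_two_mul_sub_sub, sub_self, mul_zero, zero_mul, sub_zero]

end StieltjesFunction

theorem integral_two_mul_sub_sub_mul_deriv {a : ℝ → ℝ} (ha : ContDiff ℝ 1 a) (um up : ℝ) :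
    ∫ t in um..up, (2 * t - um - up) * deriv a t
      = (up - um) * (a um + a up) - 2 * ∫ t in um..up, a t := by
  have hparts := integral_mul_deriv_eq_deriv_mul (a := um) (b := up)
    (u := fun t => 2 * t - um - up) (u' := fun _ => 2) (v := a) (v' := deriv a)
    (fun t _ => by simpa using ((hasDerivAt_id t).const_mul 2).sub_const um |>.sub_const up)
    (fun t _ => (ha.differentiable one_ne_zero t).hasDerivAt)
    intervalIntegrable_const ((ha.continuous_deriv le_rfl).intervalIntegrable _ _)
  rw [hparts, intervalIntegral.integral_const_mul]
  ring

noncomputable def chordGap (a : ℝ → ℝ) (um up v : ℝ) : ℝ := a um + slope a um up * (v - um) - a v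

section chordGap

variable {a : ℝ → ℝ} {um up : ℝ}

@[simp]
theorem chordGap_left : chordGap a um up um = 0 := by
  simp [chordGap]

@[simp]
theorem chordGap_right : chordGap a um up up = 0 := by
  rw [chordGap, mul_comm, ← smul_eq_mul, sub_smul_slope, vsub_eq_sub]
  ring

theorem hasDerivAt_chordGap {v : ℝ} (ha : DifferentiableAt ℝ a v) :
    HasDerivAt (chordGap a um up) (slope a um up - deriv a v) v :=
  ((((hasDerivAt_id v).sub_const um).const_mul (slope a um up)).const_add (a um)).sub
    ha.hasDerivAt |>.congr_deriv (by ring)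

theorem chordGap_nonneg (ha : Differentiable ℝ a) (hmono : Monotone (deriv a)) {v : ℝ}
    (hv : v ∈ Icc um up) : 0 ≤ chordGap a um up v := by
  have hderiv (v : ℝ) :
      HasDerivAt (fun v => -chordGap a um up v) (deriv a v - slope a um up) v :=
    (hasDerivAt_chordGap (ha v)).neg.congr_deriv (by ring)
  have hconv : ConvexOn ℝ univ (fun v => -chordGap a um up v) := by
    refine Monotone.convexOn_univ_of_deriv (fun v => (hderiv v).differentiableAt) ?_
    rw [funext fun v => (hderiv v).deriv]
    exact fun x y hxy => sub_le_sub_right (hmono hxy) _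
  have := hconv.le_on_segment (mem_univ um) (mem_univ up)
    (segment_eq_uIcc um up ▸ Icc_subset_uIcc hv)
  simpa using this

theorem integral_chordGap (ha : ContDiff ℝ 1 a) :
    ∫ v in um..up, chordGap a um up v
      = 1 / 2 * ∫ t in um..up, (2 * t - um - up) * deriv a t := by
  have hslope : (up - um) * slope a um up = a up - a um := sub_smul_slope a um up
  have hchord : ∫ v in um..up, (a um + slope a um up * (v - um))
      = (up - um) * a um + slope a um up * ((up - um) ^ 2 / 2) := by
    rw [intervalIntegral.integral_add intervalIntegrable_const
      (Continuous.intervalIntegrable (by fun_prop) _ _), intervalIntegral.integral_const_mul,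
      intervalIntegral.integral_comp_sub_right (fun v => v), integral_id]
    simp only [intervalIntegral.integral_const, smul_eq_mul, sub_self]
    ring
  rw [integral_two_mul_sub_sub_mul_deriv ha]
  unfold chordGap
  rw [intervalIntegral.integral_sub (Continuous.intervalIntegrable (by fun_prop) _ _)
    (ha.continuous.intervalIntegrable _ _), hchord]
  linear_combination (up - um) / 2 * hslope

end chordGap

theorem sub_sub_slope_mul_sub_eq_integral {a η q : ℝ → ℝ} (ha : ContDiff ℝ 1 a)
    (hη : ContDiff ℝ 2 η) (hq : ∀ v, HasDerivAt q (deriv η v * deriv a v) v) (um up : ℝ) :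
    q up - q um - slope a um up * (η up - η um)
      = ∫ v in um..up, deriv (deriv η) v * chordGap a um up v := by
  have hη' : ContDiff ℝ 1 (deriv η) := ((contDiff_succ_iff_deriv (n := 1)).1 hη).2.2
  have ha' : Continuous (deriv a) := ha.continuous_deriv le_rfl
  have hη'c : Continuous (deriv η) := hη'.continuous
  have hqI : q up - q um = ∫ v in um..up, deriv η v * deriv a v :=
    (integral_eq_sub_of_hasDerivAt (fun v _ => hq v) ((hη'c.mul ha').intervalIntegrable _ _)).symm
  have hηI : η up - η um = ∫ v in um..up, deriv η v :=
    (integral_deriv_eq_sub (fun v _ => hη.differentiable two_ne_zero v)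
      (hη'c.intervalIntegrable _ _)).symm
  have hparts := integral_mul_deriv_eq_deriv_mul (a := um) (b := up)
    (fun v _ => (hη'.differentiable one_ne_zero v).hasDerivAt)
    (fun v _ => hasDerivAt_chordGap (um := um) (up := up) (ha.differentiable one_ne_zero v))
    ((hη'.continuous_deriv le_rfl).intervalIntegrable _ _)
    ((continuous_const.sub ha').intervalIntegrable _ _)
  rw [chordGap_left, chordGap_right, mul_zero, mul_zero, sub_zero, zero_sub] at hparts
  rw [hqI, hηI, ← intervalIntegral.integral_const_mul,
    ← neg_neg (∫ v in um..up, deriv (deriv η) v * chordGap a um up v), ← hparts,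
    ← intervalIntegral.integral_neg, ← intervalIntegral.integral_sub
      (f := fun v => deriv η v * deriv a v) (g := fun v => slope a um up * deriv η v)
      ((hη'c.mul ha').intervalIntegrable _ _) ((continuous_const.mul hη'c).intervalIntegrable _ _)]
  congr 1
  ext v
  ring

theorem abs_integral_mul_le_mul_integral {f g : ℝ → ℝ} {a b M : ℝ} (hab : a ≤ b)
    (hf : ∀ x ∈ Icc a b, |f x| ≤ M) (hg : ∀ x ∈ Icc a b, 0 ≤ g x)
    (hgi : IntervalIntegrable g volume a b) :
    |∫ x in a..b, f x * g x| ≤ M * ∫ x in a..b, g x := by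
  rw [← Real.norm_eq_abs, ← intervalIntegral.integral_const_mul]
  refine norm_integral_le_of_norm_le hab (ae_of_all _ fun x hx => ?_) (hgi.const_mul M)
  have hx' : x ∈ Icc a b := Ioc_subset_Icc_self hx
  rw [Real.norm_eq_abs, abs_mul, abs_of_nonneg (hg x hx')]
  exact mul_le_mul_of_nonneg_right (hf x hx') (hg x hx')

theorem stmt3_general (a η q : ℝ → ℝ) (ha : ContDiff ℝ 1 a)
    (A : StieltjesFunction ℝ) (hA : ∀ x, A x = deriv a x)
    (hη : ContDiff ℝ 2 η)
    (hq : ∀ v, HasDerivAt q (deriv η v * deriv a v) v)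
    (um up : ℝ) (h : um < up) :
    |q up - q um - ((a up - a um) / (up - um)) * (η up - η um)|
      ≤ (1 / 2) * (⨆ t : Set.Icc um up, |deriv (deriv η) (t : ℝ)|) *
          ∫ s in Set.Icc um up, (up - s) * (s - um) ∂A.measure := by
  have hmono : Monotone (deriv a) := fun x y hxy => by simpa only [hA] using A.mono hxy
  have hη'' : Continuous (deriv (deriv η)) :=
    ((contDiff_succ_iff_deriv (n := 1)).1 hη).2.2.continuous_deriv le_rfl
  have hsup (v : ℝ) (hv : v ∈ Icc um up) :
      |deriv (deriv η) v| ≤ ⨆ t : Set.Icc um up, |deriv (deriv η) (t : ℝ)| :=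
    le_ciSup (isCompact_range (f := fun t : Icc um up => |deriv (deriv η) t|)
      (by fun_prop)).bddAbove ⟨v, hv⟩
  rw [← slope_def_field, sub_sub_slope_mul_sub_eq_integral ha hη hq,
    A.setIntegral_Icc_sub_mul_sub h.le]
  simp only [hA]
  calc _ ≤ (⨆ t : Set.Icc um up, |deriv (deriv η) (t : ℝ)|) *
          ∫ v in um..up, chordGap a um up v :=
        abs_integral_mul_le_mul_integral h.le hsup
          (fun v hv => chordGap_nonneg (ha.differentiable one_ne_zero) hmono hv)
          (Continuous.intervalIntegrable (by unfold chordGap; fun_prop) _ _)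
    _ = _ := by rw [integral_chordGap ha]; ring

/-- The entropy cost is controlled by the regularity cost `Δ`:
`|c_η(u⁺,u⁻)| ≤ (1/2)·(sup_{[u⁻,u⁺]} |η''|)·∫_{[u⁻,u⁺]} (u⁺−s)(s−u⁻) da''(s)`. -/
theorem stmt3 (a η q : ℝ → ℝ) (ha : ContDiff ℝ 1 a) (hmono : Monotone (deriv a))
    (A : StieltjesFunction ℝ) (hA : ∀ x, A x = deriv a x)
    (hη : ContDiff ℝ 2 η)
    (hq : ∀ v, HasDerivAt q (deriv η v * deriv a v) v)
    (um up : ℝ) (h : um < up) :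
    |q up - q um - ((a up - a um) / (up - um)) * (η up - η um)|
      ≤ (1 / 2) * (⨆ t : Set.Icc um up, |deriv (deriv η) (t : ℝ)|) *
          ∫ s in Set.Icc um up, (up - s) * (s - um) ∂A.measure :=
  stmt3_general a η q ha A hA hη hq um up h
end

section
/- Fix u⁻ < u⁺ and τ ∈ [u⁻, u⁺], and let η be C² on [u⁻,u⁺]. Define w(τ) := ∫_{u⁻}^{u⁺} η'(t)·(1_{t>τ}(τ − u⁻) − 1_{t<τ}(u⁺ − τ)) dt. Then |w(τ)| ≤ (sup_{[u⁻,u⁺]} |η''|) · (1/2)·(u⁺ − u⁻)(τ − u⁻)(u⁺ − τ). -/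
/-!
Since the step weight `t ↦ 1_{t>τ}(τ - u⁻) - 1_{t<τ}(u⁺ - τ)` has zero integral over `[u⁻, u⁺]`,
`η'` may be replaced by `η' - η'(τ)`, which is `M |t - τ|`-small with `M = sup |η''|`. Integrating
this bound against the weight on `[u⁻, τ]` and on `[τ, u⁺]` gives
`M ((τ - u⁻)(u⁺ - τ)² + (u⁺ - τ)(τ - u⁻)²) / 2 = M (u⁺ - u⁻)(τ - u⁻)(u⁺ - τ) / 2`.
-/

open MeasureTheory intervalIntegral Set

lemma IsCompact.le_ciSup_of_continuousOn {α : Type*} [TopologicalSpace α] {s : Set α}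
    (hs : IsCompact s) {g : α → ℝ} (hg : ContinuousOn g s) {x : α} (hx : x ∈ s) : g x ≤ ⨆ t : s, g t := by
  have hbdd := (hs.image_of_continuousOn hg).bddAbove
  rw [image_eq_range] at hbdd
  exact le_ciSup hbdd ⟨x, hx⟩

section StepWeight

variable {f : ℝ → ℝ} {a b τ : ℝ}

lemma integral_mul_stepWeight (hτ : τ ∈ Icc a b) (ha : IntervalIntegrable f volume a τ)
    (hb : IntervalIntegrable f volume τ b) :
    ∫ t in a..b, f t * ((if τ < t then τ - a else 0) - (if t < τ then b - τ else 0)) =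
      (τ - a) * (∫ t in τ..b, f t) - (b - τ) * ∫ t in a..τ, f t := by
  have hleft : EqOn (fun t => f t * -(b - τ))
      (fun t => f t * ((if τ < t then τ - a else 0) - (if t < τ then b - τ else 0)))
      (uIoo a τ) := by
    intro t ht
    rw [uIoo_of_le hτ.1] at ht
    simp [ht.2, ht.2.not_gt]
  have hright : EqOn (fun t => f t * (τ - a))
      (fun t => f t * ((if τ < t then τ - a else 0) - (if t < τ then b - τ else 0)))
      (uIoo τ b) := by
    intro t ht
    rw [uIoo_of_le hτ.2] at ht
    simp [ht.1, ht.1.not_gt]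
  rw [← integral_add_adjacent_intervals ((ha.mul_const _).congr_uIoo hleft)
      ((hb.mul_const _).congr_uIoo hright), ← integral_congr_uIoo hleft,
    ← integral_congr_uIoo hright, intervalIntegral.integral_mul_const,
    intervalIntegral.integral_mul_const]
  ring

lemma integral_mul_stepWeight_eq_sub (hτ : τ ∈ Icc a b) (ha : IntervalIntegrable f volume a τ)
    (hb : IntervalIntegrable f volume τ b) :
    ∫ t in a..b, f t * ((if τ < t then τ - a else 0) - (if t < τ then b - τ else 0)) =
      (τ - a) * (∫ t in τ..b, (f t - f τ)) - (b - τ) * ∫ t in a..τ, (f t - f τ) := by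
  rw [integral_mul_stepWeight hτ ha hb, integral_sub ha intervalIntegrable_const,
    integral_sub hb intervalIntegrable_const, intervalIntegral.integral_const,
    intervalIntegral.integral_const, smul_eq_mul, smul_eq_mul]
  ring

end StepWeight

section CentredIntegral

variable {f : ℝ → ℝ} {a b M : ℝ}

lemma abs_integral_sub_left_le (hab : a ≤ b) (hf : ∀ x ∈ Icc a b, |f x - f a| ≤ M * (x - a)) :
    |∫ x in a..b, (f x - f a)| ≤ M * ((b - a) ^ 2 / 2) := by
  calc |∫ x in a..b, (f x - f a)|
      ≤ ∫ x in a..b, M * (x - a) := by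
        rw [← Real.norm_eq_abs]
        exact norm_integral_le_of_norm_le hab
          (ae_of_all _ fun x hx => hf x (Ioc_subset_Icc_self hx))
          (Continuous.intervalIntegrable (by fun_prop) a b)
    _ = M * ((b - a) ^ 2 / 2) := by
      rw [intervalIntegral.integral_const_mul, integral_comp_sub_right (fun x => x), integral_id]
      ring

lemma abs_integral_sub_right_le (hab : a ≤ b) (hf : ∀ x ∈ Icc a b, |f x - f b| ≤ M * (b - x)) :
    |∫ x in a..b, (f x - f b)| ≤ M * ((b - a) ^ 2 / 2) := by
  calc |∫ x in a..b, (f x - f b)|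
      ≤ ∫ x in a..b, M * (b - x) := by
        rw [← Real.norm_eq_abs]
        exact norm_integral_le_of_norm_le hab
          (ae_of_all _ fun x hx => hf x (Ioc_subset_Icc_self hx))
          (Continuous.intervalIntegrable (by fun_prop) a b)
    _ = M * ((b - a) ^ 2 / 2) := by
      rw [intervalIntegral.integral_const_mul, integral_comp_sub_left (fun x => x), integral_id]
      ring

end CentredIntegral

theorem stmt4_general (η : ℝ → ℝ) (hη : ContDiff ℝ 2 η)
    (um up τ : ℝ) (hτ : τ ∈ Set.Icc um up) :
    |∫ t in um..up, deriv η t *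
        ((if τ < t then τ - um else 0) - (if t < τ then up - τ else 0))|
      ≤ (⨆ t : Set.Icc um up, |deriv (deriv η) (t : ℝ)|) *
          ((1 / 2) * (up - um) * (τ - um) * (up - τ)) := by
  obtain ⟨hτl, hτr⟩ := hτ
  set M := ⨆ t : Set.Icc um up, |deriv (deriv η) (t : ℝ)|
  have hf : ContDiff ℝ 1 (deriv η) := hη.deriv'
  have hM : ∀ x ∈ Icc um up, ‖deriv (deriv η) x‖ ≤ M := fun x hx =>
    isCompact_Icc.le_ciSup_of_continuousOn (hf.continuous_deriv le_rfl).abs.continuousOn hx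
  have hlip : ∀ x ∈ Icc um up, |deriv η x - deriv η τ| ≤ M * |x - τ| := fun x hx =>
    (convex_Icc um up).norm_image_sub_le_of_norm_deriv_le
      (fun y _ => hf.differentiable one_ne_zero y) hM ⟨hτl, hτr⟩ hx
  have hA := abs_integral_sub_left_le hτr fun x hx =>
    (hlip x ⟨hτl.trans hx.1, hx.2⟩).trans_eq (by rw [abs_of_nonneg (sub_nonneg.2 hx.1)])
  have hB := abs_integral_sub_right_le hτl fun x hx =>
    (hlip x ⟨hx.1, hx.2.trans hτr⟩).trans_eq
      (by rw [abs_sub_comm, abs_of_nonneg (sub_nonneg.2 hx.2)])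
  rw [integral_mul_stepWeight_eq_sub ⟨hτl, hτr⟩ (hf.continuous.intervalIntegrable _ _)
    (hf.continuous.intervalIntegrable _ _)]
  calc _ ≤ (τ - um) * |∫ t in τ..up, (deriv η t - deriv η τ)|
        + (up - τ) * |∫ t in um..τ, (deriv η t - deriv η τ)| := by
        refine (abs_sub _ _).trans_eq ?_
        rw [abs_mul, abs_mul, abs_of_nonneg (sub_nonneg.2 hτl), abs_of_nonneg (sub_nonneg.2 hτr)]
    _ ≤ (τ - um) * (M * ((up - τ) ^ 2 / 2)) + (up - τ) * (M * ((τ - um) ^ 2 / 2)) := by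
        gcongr
    _ = M * (1 / 2 * (up - um) * (τ - um) * (up - τ)) := by ring

/-- Bound on the weight `w(τ)` appearing in the entropy cost computation. -/
theorem stmt4 (η : ℝ → ℝ) (hη : ContDiff ℝ 2 η)
    (um up τ : ℝ) (h : um < up) (hτ : τ ∈ Set.Icc um up) :
    |∫ t in um..up, deriv η t *
        ((if τ < t then τ - um else 0) - (if t < τ then up - τ else 0))|
      ≤ (⨆ t : Set.Icc um up, |deriv (deriv η) (t : ℝ)|) *
          ((1 / 2) * (up - um) * (τ - um) * (up - τ)) :=
  stmt4_general η hη um up τ hτ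
end

section
/- Let a : ℝ → ℝ be C¹ and convex, u : ℝ → ℝ bounded measurable, ρ_ε a nonnegative mollifier with unit mass supported in [−ε,ε]. Then for every x: (a∘u)⋆ρ_ε(x) − a((u⋆ρ_ε)(x)) ≤ ∫ (∫_{u(x)}^{u(z)} (a'(τ) − a'(u(x))) dτ) ρ_ε(x − z) dz. -/
/-!
By the fundamental theorem of calculus the inner integral equals
`a (u z) - a (u x) - a' (u x) (u z - u x)`, so, against a weight of unit mass, the right-hand side
is exactly `(a ∘ u) ⋆ ρ_ε (x) - (a (u x) + a' (u x) (v - u x))` with `v = (u ⋆ ρ_ε)(x)`. The claim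
is then the tangent-line inequality `a (u x) + a' (u x) (v - u x) ≤ a v` of the convex function
`a`.
-/

open MeasureTheory intervalIntegral

theorem ConvexOn.add_deriv_mul_sub_le {S : Set ℝ} {f : ℝ → ℝ} (hf : ConvexOn ℝ S f) {x y : ℝ}
    (hx : x ∈ S) (hy : y ∈ S) (hfd : DifferentiableAt ℝ f x) :
    f x + deriv f x * (y - x) ≤ f y := by
  rcases lt_trichotomy x y with hxy | rfl | hyx
  · have hslope := hf.deriv_le_slope hx hy hxy hfd
    rw [slope_def_field, le_div_iff₀ (sub_pos.2 hxy)] at hslope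
    linarith
  · simp
  · have hslope := hf.slope_le_deriv hy hx hyx hfd
    rw [slope_def_field, div_le_iff₀ (sub_pos.2 hyx)] at hslope
    linarith

theorem integral_deriv_sub_const {f : ℝ → ℝ} (hf : ContDiff ℝ 1 f) (c p q : ℝ) :
    ∫ τ in p..q, (deriv f τ - c) = f q - f p - c * (q - p) := by
  have hcont : Continuous (deriv f) := hf.continuous_deriv le_rfl
  rw [integral_sub (hcont.intervalIntegrable _ _) intervalIntegrable_const,
    integral_deriv_eq_sub (fun t _ => hf.differentiable one_ne_zero t)
      (hcont.intervalIntegrable _ _), intervalIntegral.integral_const, smul_eq_mul, mul_comm]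

theorem MeasureTheory.Integrable.comp_mul_of_abs_le {α : Type*} [MeasurableSpace α]
    {μ : Measure α} {g : ℝ → ℝ} {u w : α → ℝ} {M : ℝ} (hg : Continuous g) (hu : Measurable u)
    (hM : ∀ z, |u z| ≤ M) (hw : Integrable w μ) :
    Integrable (fun z => g (u z) * w z) μ := by
  obtain ⟨C, hC⟩ :=
    (isCompact_Icc (a := -M) (b := M)).exists_bound_of_continuousOn hg.continuousOn
  exact hw.bdd_mul (hg.measurable.comp hu).aestronglyMeasurable
    (.of_forall fun z => hC _ (abs_le.mp (hM z)))

theorem integral_integral_deriv_sub_deriv_mul {α : Type*} [MeasurableSpace α] {μ : Measure α}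
    {f : ℝ → ℝ} (hf : ContDiff ℝ 1 f) {u w : α → ℝ} (hw : Integrable w μ) (hw1 : ∫ z, w z ∂μ = 1)
    (hfu : Integrable (fun z => f (u z) * w z) μ) (hu : Integrable (fun z => u z * w z) μ)
    (y : ℝ) :
    ∫ z, (∫ τ in y..(u z), (deriv f τ - deriv f y)) * w z ∂μ
      = (∫ z, f (u z) * w z ∂μ) - (f y + deriv f y * ((∫ z, u z * w z ∂μ) - y)) := by
  simp_rw [integral_deriv_sub_const hf]
  have hsplit : ∀ z, (f (u z) - f y - deriv f y * (u z - y)) * w z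
      = f (u z) * w z - ((f y - deriv f y * y) * w z + deriv f y * (u z * w z)) := by
    intro z; ring
  simp_rw [hsplit]
  have hlin : Integrable (fun z => (f y - deriv f y * y) * w z + deriv f y * (u z * w z)) μ :=
    (hw.const_mul _).add (hu.const_mul _)
  rw [integral_sub hfu hlin,
    integral_add (hw.const_mul _) (hu.const_mul _), MeasureTheory.integral_const_mul,
    MeasureTheory.integral_const_mul, hw1]
  ring

theorem stmt7_general (a : ℝ → ℝ) (ha : ContDiff ℝ 1 a) (hconv : ConvexOn ℝ Set.univ a)
    (u : ℝ → ℝ) (hu : Measurable u) (hb : ∃ M, ∀ x, |u x| ≤ M)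
    (ρε : ℝ → ℝ) (hρint : Integrable ρε)
    (hρ1 : ∫ x, ρε x = 1)
    (x : ℝ) :
    (∫ z, a (u z) * ρε (x - z)) - a (∫ z, u z * ρε (x - z))
      ≤ ∫ z, (∫ τ in (u x)..(u z), (deriv a τ - deriv a (u x))) * ρε (x - z) := by
  obtain ⟨M, hM⟩ := hb
  have hw : Integrable (fun z => ρε (x - z)) := hρint.comp_sub_left x
  have hw1 : ∫ z, ρε (x - z) = 1 := by rw [integral_sub_left_eq_self, hρ1]
  rw [integral_integral_deriv_sub_deriv_mul ha hw hw1 (hw.comp_mul_of_abs_le ha.continuous hu hM)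
    (hw.comp_mul_of_abs_le (g := id) continuous_id hu hM)]
  linarith [hconv.add_deriv_mul_sub_le (Set.mem_univ (u x))
    (Set.mem_univ (∫ z, u z * ρε (x - z))) (ha.differentiable one_ne_zero _)]

/-- Commutator estimate: for `a` C¹ convex, `u` bounded measurable and `ρ_ε` a nonnegative
mollifier of unit mass supported in `[−ε,ε]`,
`(a∘u)⋆ρ_ε(x) − a((u⋆ρ_ε)(x)) ≤ ∫ (∫_{u(x)}^{u(z)} (a'(τ)−a'(u(x))) dτ) ρ_ε(x−z) dz`. -/
theorem stmt7 (a : ℝ → ℝ) (ha : ContDiff ℝ 1 a) (hconv : ConvexOn ℝ Set.univ a)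
    (u : ℝ → ℝ) (hu : Measurable u) (hb : ∃ M, ∀ x, |u x| ≤ M)
    (ε : ℝ) (hε : 0 < ε)
    (ρε : ℝ → ℝ) (hρ0 : ∀ x, 0 ≤ ρε x) (hρint : Integrable ρε)
    (hρ1 : ∫ x, ρε x = 1) (hsupp : Function.support ρε ⊆ Set.Icc (-ε) ε)
    (x : ℝ) :
    (∫ z, a (u z) * ρε (x - z)) - a (∫ z, u z * ρε (x - z))
      ≤ ∫ z, (∫ τ in (u x)..(u z), (deriv a τ - deriv a (u x))) * ρε (x - z) :=
  stmt7_general a ha hconv u hu hb ρε hρint hρ1 x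
end

section
/- Let a : ℝ → ℝ be C¹ with a' strictly increasing, and define G_v(r) := ∫_{v−r}^{v+r} ∫_{v−r}^{v+r} |a'(σ) − a'(τ)| dσ dτ for r ≥ 0. Then G_v is strictly convex on [0,∞). -/
/-!
For monotone `f` the absolute value in `∫∫ |f σ - f τ|` can be removed by splitting the inner
integral at `σ`; an integration by parts then collapses the double integral over `[A, B]²` to the
single moment `4 ∫_A^B (τ - (A + B)/2) f τ dτ`. With `f = a'` and `[A, B] = [v - r, v + r]` this
gives `G_v(r) = 4 ∫_{v-r}^{v+r} (τ - v) a'(τ) dτ`, whose derivative `4 r (a'(v + r) - a'(v - r))`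
is strictly increasing on `r > 0`.
-/

open MeasureTheory intervalIntegral Set

section

variable {f : ℝ → ℝ}

theorem integral_abs_sub_of_monotone (hf : Continuous f) (hm : Monotone f) {A B σ : ℝ}
    (hAσ : A ≤ σ) (hσB : σ ≤ B) :
    ∫ τ in A..B, |f σ - f τ| =
      ((σ - A) * f σ - ∫ τ in A..σ, f τ) + ((∫ τ in σ..B, f τ) - (B - σ) * f σ) := by
  have hint : ∀ a b : ℝ, IntervalIntegrable (fun τ => |f σ - f τ|) volume a b :=
    fun a b => (continuous_const.sub hf).abs.intervalIntegrable a b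
  have hleft : EqOn (fun τ => |f σ - f τ|) (fun τ => f σ - f τ) (uIcc A σ) := by
    intro τ hτ
    rw [uIcc_of_le hAσ] at hτ
    exact abs_of_nonneg (sub_nonneg.2 (hm hτ.2))
  have hright : EqOn (fun τ => |f σ - f τ|) (fun τ => f τ - f σ) (uIcc σ B) := by
    intro τ hτ
    rw [uIcc_of_le hσB] at hτ
    exact abs_of_nonpos (sub_nonpos.2 (hm hτ.1)) |>.trans (neg_sub _ _)
  rw [← integral_add_adjacent_intervals (hint A σ) (hint σ B), integral_congr hleft,
    integral_congr hright, integral_sub intervalIntegrable_const (hf.intervalIntegrable _ _),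
    integral_sub (hf.intervalIntegrable _ _) intervalIntegrable_const,
    intervalIntegral.integral_const, intervalIntegral.integral_const, smul_eq_mul, smul_eq_mul]

theorem integral_sub_mul (hf : Continuous f) (A B c : ℝ) :
    ∫ x in A..B, (x - c) * f x = (∫ x in A..B, x * f x) - c * ∫ x in A..B, f x := by
  simp only [sub_mul]
  rw [integral_sub (Continuous.intervalIntegrable (by fun_prop) _ _)
    (Continuous.intervalIntegrable (by fun_prop) _ _), intervalIntegral.integral_const_mul]

theorem integral_const_sub_mul (hf : Continuous f) (A B c : ℝ) :
    ∫ x in A..B, (c - x) * f x = c * (∫ x in A..B, f x) - ∫ x in A..B, x * f x := by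
  simp only [sub_mul]
  rw [integral_sub (Continuous.intervalIntegrable (by fun_prop) _ _)
    (Continuous.intervalIntegrable (by fun_prop) _ _), intervalIntegral.integral_const_mul]

theorem integral_integral_eq_integral_sub_mul (hf : Continuous f) (A B : ℝ) :
    ∫ σ in A..B, ∫ τ in A..σ, f τ = ∫ τ in A..B, (B - τ) * f τ := by
  have hparts := integral_mul_deriv_eq_deriv_mul (a := A) (b := B) (v := fun x => x - B)
    (fun x _ => (hf.integral_hasStrictDerivAt A x).hasDerivAt)
    (fun x _ => (hasDerivAt_id x).sub_const B)
    (hf.intervalIntegrable _ _) intervalIntegrable_const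
  simp only [mul_one, sub_self, mul_zero, integral_same, zero_mul, zero_sub] at hparts
  rw [hparts, ← intervalIntegral.integral_neg]
  congr 1
  ext τ
  ring

theorem integral_integral_abs_sub_of_monotone (hf : Continuous f) (hm : Monotone f) {A B : ℝ}
    (hAB : A ≤ B) :
    ∫ σ in A..B, ∫ τ in A..B, |f σ - f τ| = 4 * ∫ τ in A..B, (τ - (A + B) / 2) * f τ := by
  have hF : Continuous fun σ => ∫ τ in A..σ, f τ :=
    continuous_primitive (fun a b => hf.intervalIntegrable a b) A
  have hpointwise : EqOn (fun σ => ∫ τ in A..B, |f σ - f τ|)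
      (fun σ => 2 * ((σ - (A + B) / 2) * f σ) +
        ((∫ τ in A..B, f τ) - 2 * ∫ τ in A..σ, f τ)) (uIcc A B) := by
    intro σ hσ
    rw [uIcc_of_le hAB] at hσ
    simp only [integral_abs_sub_of_monotone hf hm hσ.1 hσ.2,
      ← integral_interval_sub_left (hf.intervalIntegrable A B) (hf.intervalIntegrable A σ)]
    ring
  rw [integral_congr hpointwise,
    integral_add (Continuous.intervalIntegrable (by fun_prop) _ _)
      (intervalIntegrable_const.sub ((hF.intervalIntegrable _ _).const_mul 2)),
    integral_sub intervalIntegrable_const ((hF.intervalIntegrable _ _).const_mul 2),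
    intervalIntegral.integral_const_mul, intervalIntegral.integral_const_mul,
    intervalIntegral.integral_const, smul_eq_mul,
    integral_integral_eq_integral_sub_mul hf, integral_const_sub_mul hf, integral_sub_mul hf]
  ring

theorem hasDerivAt_integral_sub_add {g : ℝ → ℝ} (hg : Continuous g) (v r : ℝ) :
    HasDerivAt (fun r => ∫ τ in (v - r)..(v + r), g τ) (g (v + r) + g (v - r)) r := by
  have hsplit : (fun r => ∫ τ in (v - r)..(v + r), g τ) =
      fun r => (∫ τ in v..(v + r), g τ) - ∫ τ in v..(v - r), g τ := by
    ext r
    exact (integral_interval_sub_left (hg.intervalIntegrable _ _) (hg.intervalIntegrable _ _)).symm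
  have hprim : ∀ x, HasDerivAt (fun x => ∫ τ in v..x, g τ) (g x) x :=
    fun x => (hg.integral_hasStrictDerivAt v x).hasDerivAt
  rw [hsplit, ← sub_neg_eq_add]
  exact ((hprim _).comp_const_add v r).sub ((hprim _).comp_const_sub v r)

theorem strictConvexOn_const_mul_integral_sub_mul (hf : Continuous f) (hmono : StrictMono f)
    (v : ℝ) {c : ℝ} (hc : 0 < c) :
    StrictConvexOn ℝ (Ici 0) (fun r => c * ∫ τ in (v - r)..(v + r), (τ - v) * f τ) := by
  have hderiv : ∀ r, HasDerivAt (fun r => c * ∫ τ in (v - r)..(v + r), (τ - v) * f τ)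
      (c * (r * (f (v + r) - f (v - r)))) r := by
    intro r
    exact ((hasDerivAt_integral_sub_add (g := fun τ => (τ - v) * f τ)
      (by fun_prop) v r).const_mul c).congr_deriv (by ring)
  refine StrictMonoOn.strictConvexOn_of_deriv (convex_Ici 0)
    (fun r _ => (hderiv r).continuousAt.continuousWithinAt) ?_
  rw [interior_Ici]
  intro x (hx : 0 < x) y (hy : 0 < y) hxy
  simp only [(hderiv _).deriv]
  have hspread_nonneg : 0 ≤ f (v + x) - f (v - x) := sub_nonneg.2 (hmono.monotone (by linarith))
  have hspread_lt : f (v + x) - f (v - x) < f (v + y) - f (v - y) := by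
    linarith [hmono (show v - y < v - x by linarith), hmono (show v + x < v + y by linarith)]
  gcongr c * ?_
  exact mul_lt_mul'' hxy hspread_lt hx.le hspread_nonneg

end

/-- If `a'` is strictly increasing then `G_v` is strictly convex on `[0,∞)`. -/
theorem stmt9 (a : ℝ → ℝ) (ha : ContDiff ℝ 1 a) (hmono : StrictMono (deriv a)) (v : ℝ) :
    StrictConvexOn ℝ (Set.Ici (0 : ℝ))
      (fun r => ∫ σ in (v - r)..(v + r), ∫ τ in (v - r)..(v + r),
        |deriv a σ - deriv a τ|) := by
  have hcont : Continuous (deriv a) := ha.continuous_deriv le_rfl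
  refine (strictConvexOn_const_mul_integral_sub_mul hcont hmono v four_pos).congr ?_
  intro r (hr : 0 ≤ r)
  have hcentre : (v - r + (v + r)) / 2 = v := by ring
  simp only [integral_integral_abs_sub_of_monotone hcont hmono.monotone
    (by linarith : v - r ≤ v + r), hcentre]
end

section
/- Let a : ℝ → ℝ be C¹ with a' nondecreasing, and suppose the Lebesgue–Stieltjes measure a'' is doubling on an interval I with doubling constant D. Define Δ(u₁,u₂) := ∫_{[u₁,u₂]} (u₂ − s)(s − u₁) da''(s) (for u₁ ≤ u₂) and Δ̂(u₁,u₂) := |u₁ − u₂|² · a''([min(u₁,u₂) − |u₁−u₂|, max(u₁,u₂) + |u₁−u₂|]). Then there exists C > 0 depending only on D with Δ(u₁,u₂) ≥ C·Δ̂(u₁,u₂) for all u₁, u₂ ∈ I. -/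
open MeasureTheory Set

/-!
Let `c` be the midpoint of `[u₁, u₂]` and `ρ = |u₁ - u₂| / 4`. On the middle half
`[c - ρ, c + ρ]` of `[u₁, u₂]` the weight `(u₂ - s)(s - u₁)` is at least `ρ²`, so
`Δ(u₁, u₂) ≥ ρ² a''([c - ρ, c + ρ])`. Three doublings at `c` bound the measure of
`[c - 8ρ, c + 8ρ] ⊇ [u₁ - |u₁ - u₂|, u₂ + |u₁ - u₂|]` by `D³ a''([c - ρ, c + ρ])`,
whence `Δ ≥ Δ̂ / (16 D³)`.
-/

namespace MeasureTheory.Measure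

def IsDoublingAt (μ : Measure ℝ) (D c : ℝ) : Prop :=
  ∀ ρ : ℝ, 0 < ρ → μ (Icc (c - 2 * ρ) (c + 2 * ρ)) ≤ ENNReal.ofReal D * μ (Icc (c - ρ) (c + ρ))

variable {μ : Measure ℝ} {D c : ℝ}

theorem IsDoublingAt.measure_Icc_two_pow_mul_le (hμ : μ.IsDoublingAt D c) {ρ : ℝ} (hρ : 0 < ρ)
    (n : ℕ) :
    μ (Icc (c - 2 ^ n * ρ) (c + 2 ^ n * ρ)) ≤ ENNReal.ofReal D ^ n * μ (Icc (c - ρ) (c + ρ)) := by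
  induction n with
  | zero => simp
  | succ n ih =>
    calc μ (Icc (c - 2 ^ (n + 1) * ρ) (c + 2 ^ (n + 1) * ρ))
        = μ (Icc (c - 2 * (2 ^ n * ρ)) (c + 2 * (2 ^ n * ρ))) := by ring_nf
      _ ≤ ENNReal.ofReal D * μ (Icc (c - 2 ^ n * ρ) (c + 2 ^ n * ρ)) := hμ _ (by positivity)
      _ ≤ ENNReal.ofReal D * (ENNReal.ofReal D ^ n * μ (Icc (c - ρ) (c + ρ))) := by gcongr
      _ = ENNReal.ofReal D ^ (n + 1) * μ (Icc (c - ρ) (c + ρ)) := by ring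

theorem IsDoublingAt.measureReal_Icc_two_pow_mul_le [IsFiniteMeasureOnCompacts μ]
    (hμ : μ.IsDoublingAt D c) (hD : 0 ≤ D) {ρ : ℝ} (hρ : 0 < ρ) (n : ℕ) :
    μ.real (Icc (c - 2 ^ n * ρ) (c + 2 ^ n * ρ)) ≤ D ^ n * μ.real (Icc (c - ρ) (c + ρ)) := by
  have h := ENNReal.toReal_mono (ENNReal.mul_ne_top (by simp) isCompact_Icc.measure_ne_top)
    (hμ.measure_Icc_two_pow_mul_le hρ n)
  rwa [ENNReal.toReal_mul, ENNReal.toReal_pow, ENNReal.toReal_ofReal hD] at h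

end MeasureTheory.Measure

theorem sq_mul_measureReal_le_setIntegral_Icc {μ : Measure ℝ} [IsFiniteMeasureOnCompacts μ]
    {u₁ u₂ a b δ : ℝ} (ha : u₁ + δ ≤ a) (hb : b + δ ≤ u₂) (hδ : 0 ≤ δ) :
    δ ^ 2 * μ.real (Icc a b) ≤ ∫ s in Icc u₁ u₂, (u₂ - s) * (s - u₁) ∂μ := by
  have hint : IntegrableOn (fun s ↦ (u₂ - s) * (s - u₁)) (Icc u₁ u₂) μ :=
    (by fun_prop : Continuous fun s : ℝ ↦ (u₂ - s) * (s - u₁)).integrableOn_Icc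
  calc δ ^ 2 * μ.real (Icc a b)
      ≤ ∫ s in Icc a b, (u₂ - s) * (s - u₁) ∂μ := by
        refine setIntegral_ge_of_const_le_real measurableSet_Icc isCompact_Icc.measure_ne_top
          (fun s hs ↦ ?_) (hint.mono_set (Icc_subset_Icc (by linarith) (by linarith)))
        rw [sq]
        exact mul_le_mul (by linarith [hs.2]) (by linarith [hs.1]) hδ (by linarith [hs.2])
    _ ≤ ∫ s in Icc u₁ u₂, (u₂ - s) * (s - u₁) ∂μ := by
        refine setIntegral_mono_set hint ?_
          (Icc_subset_Icc (by linarith) (by linarith)).eventuallyLE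
        filter_upwards [ae_restrict_mem measurableSet_Icc] with s hs
        exact mul_nonneg (by linarith [hs.2]) (by linarith [hs.1])

theorem sq_mul_measureReal_Icc_le_of_isDoublingAt {μ : Measure ℝ} [IsFiniteMeasureOnCompacts μ]
    {D u₁ u₂ : ℝ} (hD : 0 ≤ D) (hu : u₁ ≤ u₂) (hμ : μ.IsDoublingAt D ((u₁ + u₂) / 2)) :
    (u₂ - u₁) ^ 2 * μ.real (Icc (u₁ - (u₂ - u₁)) (u₂ + (u₂ - u₁)))
      ≤ 16 * D ^ 3 * ∫ s in Icc u₁ u₂, (u₂ - s) * (s - u₁) ∂μ := by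
  rcases hu.eq_or_lt with rfl | hlt
  · rw [sub_self, zero_pow two_ne_zero, zero_mul]
    exact mul_nonneg (by positivity) (setIntegral_nonneg measurableSet_Icc
      fun s hs ↦ mul_nonneg (by linarith [hs.2]) (by linarith [hs.1]))
  set c := (u₁ + u₂) / 2 with hc
  set ρ := (u₂ - u₁) / 4 with hρ_def
  have hρ : 0 < ρ := by positivity
  have hout : μ.real (Icc (u₁ - (u₂ - u₁)) (u₂ + (u₂ - u₁)))
      ≤ D ^ 3 * μ.real (Icc (c - ρ) (c + ρ)) :=
    (measureReal_mono (Icc_subset_Icc (by linarith) (by linarith))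
      isCompact_Icc.measure_ne_top).trans
      (hμ.measureReal_Icc_two_pow_mul_le hD hρ 3)
  have hin : ρ ^ 2 * μ.real (Icc (c - ρ) (c + ρ))
      ≤ ∫ s in Icc u₁ u₂, (u₂ - s) * (s - u₁) ∂μ :=
    sq_mul_measureReal_le_setIntegral_Icc (by linarith) (by linarith) hρ.le
  calc (u₂ - u₁) ^ 2 * μ.real (Icc (u₁ - (u₂ - u₁)) (u₂ + (u₂ - u₁)))
      ≤ (4 * ρ) ^ 2 * (D ^ 3 * μ.real (Icc (c - ρ) (c + ρ))) := by
        rw [show 4 * ρ = u₂ - u₁ by ring]; gcongr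
    _ = 16 * D ^ 3 * (ρ ^ 2 * μ.real (Icc (c - ρ) (c + ρ))) := by ring
    _ ≤ 16 * D ^ 3 * ∫ s in Icc u₁ u₂, (u₂ - s) * (s - u₁) ∂μ := by gcongr

/-- If `a''` is doubling on an interval `I` with constant `D`, then `Δ ≥ C·Δ̂` on `I × I`
for some `C > 0` depending only on `D`. -/
theorem stmt15 (D : ℝ) (hD : 0 < D) :
    ∃ C > 0, ∀ (a : ℝ → ℝ), ContDiff ℝ 1 a → Monotone (deriv a) →
      ∀ (A : StieltjesFunction ℝ), (∀ x, A x = deriv a x) →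
      ∀ I : Set ℝ, Convex ℝ I →
      (∀ c ∈ I, ∀ ρ : ℝ, 0 < ρ →
        A.measure (Set.Icc (c - 2 * ρ) (c + 2 * ρ))
          ≤ ENNReal.ofReal D * A.measure (Set.Icc (c - ρ) (c + ρ))) →
      ∀ u₁ u₂ : ℝ, u₁ ∈ I → u₂ ∈ I →
        C * (|u₁ - u₂| ^ 2 *
              (A.measure (Set.Icc (min u₁ u₂ - |u₁ - u₂|) (max u₁ u₂ + |u₁ - u₂|))).toReal)
          ≤ ∫ s in Set.Icc (min u₁ u₂) (max u₁ u₂),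
              (max u₁ u₂ - s) * (s - min u₁ u₂) ∂A.measure := by
  refine ⟨1 / (16 * D ^ 3), by positivity, fun a _ _ A _ I hI hdoub u₁ u₂ hu₁ hu₂ ↦ ?_⟩
  have hle : min u₁ u₂ ≤ max u₁ u₂ := min_le_max
  have hmid : (min u₁ u₂ + max u₁ u₂) / 2 ∈ I :=
    hI.ordConnected.uIcc_subset hu₁ hu₂ ⟨by linarith, by linarith⟩
  have key := sq_mul_measureReal_Icc_le_of_isDoublingAt hD.le hle (hdoub _ hmid)
  rw [max_sub_min_eq_abs', measureReal_def] at key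
  rw [div_mul_eq_mul_div, one_mul, div_le_iff₀ (by positivity)]
  linarith
end

section
/- Let a : ℝ → ℝ be C¹ with a' nondecreasing and let I ⊂ ℝ be a compact interval. Then Δ(u₁,u₂) := ∫_{[min(u₁,u₂),max(u₁,u₂)]} (max(u₁,u₂) − s)(s − min(u₁,u₂)) da''(s) is Lipschitz continuous on I × I with Lipschitz constant at most C·|I|·a''(I) for some absolute constant C. -/
/-!
For `w ∈ I × I`, extending the integrand by positive parts writes
`Δ w = ∫_I (max w - s)⁺ (s - min w)⁺ da''(s)`. For fixed `s ∈ I` the integrand is a product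
of two `1`-Lipschitz functions of `w`, each bounded by `|I|`, hence `2|I|`-Lipschitz, and
integrating over `I` gives the Lipschitz constant `2 |I| a''(I)`.
-/

open MeasureTheory

open scoped NNReal ENNReal

theorem LipschitzOnWith.mul_of_norm_le {α R : Type*} [PseudoMetricSpace α] [SeminormedRing R]
    {f g : α → R} {s : Set α} {Kf Kg Mf Mg : ℝ≥0}
    (hf : LipschitzOnWith Kf f s) (hg : LipschitzOnWith Kg g s)
    (hf_le : ∀ x ∈ s, ‖f x‖ ≤ Mf) (hg_le : ∀ x ∈ s, ‖g x‖ ≤ Mg) :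
    LipschitzOnWith (Kf * Mg + Mf * Kg) (fun x => f x * g x) s := by
  refine LipschitzOnWith.of_dist_le_mul fun x hx y hy => ?_
  rw [dist_eq_norm,
    show f x * g x - f y * g y = (f x - f y) * g x + f y * (g x - g y) by noncomm_ring]
  calc ‖(f x - f y) * g x + f y * (g x - g y)‖
      ≤ ‖f x - f y‖ * ‖g x‖ + ‖f y‖ * ‖g x - g y‖ :=
        (norm_add_le _ _).trans (add_le_add (norm_mul_le _ _) (norm_mul_le _ _))
    _ ≤ (Kf * dist x y) * Mg + Mf * (Kg * dist x y) := by
        rw [← dist_eq_norm, ← dist_eq_norm]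
        gcongr
        exacts [hf.dist_le_mul x hx y hy, hg_le x hx, hf_le y hy, hg.dist_le_mul x hx y hy]
    _ = ↑(Kf * Mg + Mf * Kg) * dist x y := by push_cast; ring

theorem LipschitzOnWith.setIntegral {α β E : Type*} [PseudoMetricSpace α] [MeasurableSpace β]
    [NormedAddCommGroup E] [NormedSpace ℝ E] {μ : Measure β} {S : Set β} {T : Set α}
    {F : α → β → E} {K : ℝ≥0} (hS : μ S < ∞) (hF : ∀ w ∈ T, IntegrableOn (F w) S μ)
    (hlip : ∀ s ∈ S, LipschitzOnWith K (fun w => F w s) T) :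
    LipschitzOnWith (K * (μ S).toNNReal) (fun w => ∫ s in S, F w s ∂μ) T := by
  refine LipschitzOnWith.of_dist_le_mul fun w hw w' hw' => ?_
  rw [dist_eq_norm, ← integral_sub (hF w hw) (hF w' hw')]
  calc ‖∫ s in S, (F w s - F w' s) ∂μ‖ ≤ K * dist w w' * μ.real S :=
        norm_setIntegral_le_of_norm_le_const hS fun s hs => by
          rw [← dist_eq_norm]; exact (hlip s hs).dist_le_mul w hw w' hw'
    _ = ↑(K * (μ S).toNNReal) * dist w w' := by
        rw [NNReal.coe_mul, ENNReal.coe_toNNReal_eq_toReal, measureReal_def]; ring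

theorem LipschitzOnWith.congr {α β : Type*} [PseudoEMetricSpace α] [PseudoEMetricSpace β]
    {f g : α → β} {s : Set α} {K : ℝ≥0} (hf : LipschitzOnWith K f s) (hfg : Set.EqOn f g s) :
    LipschitzOnWith K g s := fun x hx y hy => by
  rw [← hfg hx, ← hfg hy]; exact hf hx hy

noncomputable def parabolicBump (u v s : ℝ) : ℝ := (v - s)⁺ * (s - u)⁺

theorem continuous_parabolicBump (u v : ℝ) : Continuous (parabolicBump u v) := by
  unfold parabolicBump; fun_prop

theorem setIntegral_Icc_eq_setIntegral_parabolicBump {μ : Measure ℝ} {u v : ℝ} {S : Set ℝ}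
    (hS : MeasurableSet S) (huv : Set.Icc u v ⊆ S) :
    ∫ s in Set.Icc u v, (v - s) * (s - u) ∂μ = ∫ s in S, parabolicBump u v s ∂μ := by
  rw [setIntegral_eq_of_subset_of_forall_sdiff_eq_zero hS huv]
  · refine setIntegral_congr_fun measurableSet_Icc fun s ⟨hus, hsv⟩ => ?_
    simp [parabolicBump, posPart_eq_self.2 (sub_nonneg.2 hus),
      posPart_eq_self.2 (sub_nonneg.2 hsv)]
  · rintro s ⟨-, hs⟩
    rcases not_and_or.1 hs with hsu | hvs
    · simp [parabolicBump, posPart_eq_zero.2 (sub_nonpos.2 (le_of_not_ge hsu))]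
    · simp [parabolicBump, posPart_eq_zero.2 (sub_nonpos.2 (le_of_not_ge hvs))]

theorem lipschitzOnWith_parabolicBump_min_max {p q s : ℝ} (hs : s ∈ Set.Icc p q) :
    LipschitzOnWith (2 * (q - p).toNNReal)
      (fun w : ℝ × ℝ => parabolicBump (min w.1 w.2) (max w.1 w.2) s)
      (Set.Icc p q ×ˢ Set.Icc p q) := by
  have hright : LipschitzWith 1 (fun w : ℝ × ℝ => (max w.1 w.2 - s)⁺) := by
    simpa [Function.comp_def] using
      lipschitzWith_posPart.comp (lipschitzWith_max.sub (LipschitzWith.const s))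
  have hleft : LipschitzWith 1 (fun w : ℝ × ℝ => (s - min w.1 w.2)⁺) := by
    simpa [Function.comp_def] using
      lipschitzWith_posPart.comp ((LipschitzWith.const s).sub lipschitzWith_min)
  obtain ⟨hps, hsq⟩ := hs
  have hright_le : ∀ w ∈ Set.Icc p q ×ˢ Set.Icc p q,
      ‖(max w.1 w.2 - s)⁺‖ ≤ (q - p).toNNReal := by
    rintro w ⟨⟨-, h1q⟩, ⟨-, h2q⟩⟩
    rw [Real.norm_of_nonneg (posPart_nonneg _), Real.coe_toNNReal _ (by linarith)]
    exact sup_le (by linarith [max_le h1q h2q]) (by linarith)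
  have hleft_le : ∀ w ∈ Set.Icc p q ×ˢ Set.Icc p q,
      ‖(s - min w.1 w.2)⁺‖ ≤ (q - p).toNNReal := by
    rintro w ⟨⟨hp1, -⟩, ⟨hp2, -⟩⟩
    rw [Real.norm_of_nonneg (posPart_nonneg _), Real.coe_toNNReal _ (by linarith)]
    exact sup_le (by linarith [le_min hp1 hp2]) (by linarith)
  have := hright.lipschitzOnWith.mul_of_norm_le hleft.lipschitzOnWith hright_le hleft_le
  rwa [one_mul, mul_one, ← two_mul] at this

/-- `Δ` is Lipschitz on `I × I` with Lipschitz constant at most `C·|I|·a''(I)` for some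
absolute constant `C`. -/
theorem stmt16 :
    ∃ C > 0, ∀ (a : ℝ → ℝ), ContDiff ℝ 1 a → Monotone (deriv a) →
      ∀ (A : StieltjesFunction ℝ), (∀ x, A x = deriv a x) →
      ∀ p q : ℝ, p ≤ q →
        LipschitzOnWith
          (Real.toNNReal (C * (q - p) * (A.measure (Set.Icc p q)).toReal))
          (fun w : ℝ × ℝ =>
            ∫ s in Set.Icc (min w.1 w.2) (max w.1 w.2),
              (max w.1 w.2 - s) * (s - min w.1 w.2) ∂A.measure)
          (Set.Icc p q ×ˢ Set.Icc p q) := by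
  refine ⟨2, two_pos, fun a _ _ A _ p q _ => ?_⟩
  have hbump : LipschitzOnWith (2 * (q - p).toNNReal * (A.measure (Set.Icc p q)).toNNReal)
      (fun w : ℝ × ℝ =>
        ∫ s in Set.Icc p q, parabolicBump (min w.1 w.2) (max w.1 w.2) s ∂A.measure)
      (Set.Icc p q ×ˢ Set.Icc p q) :=
    LipschitzOnWith.setIntegral isCompact_Icc.measure_lt_top
      (fun w _ => (continuous_parabolicBump _ _).integrableOn_Icc)
      fun s hs => lipschitzOnWith_parabolicBump_min_max hs
  refine (hbump.congr fun w ⟨⟨hp1, h1q⟩, ⟨hp2, h2q⟩⟩ => ?_).weaken (le_of_eq ?_)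
  · exact (setIntegral_Icc_eq_setIntegral_parabolicBump measurableSet_Icc
      (Set.Icc_subset_Icc (le_min hp1 hp2) (max_le h1q h2q))).symm
  · rw [Real.toNNReal_mul (by positivity), Real.toNNReal_mul (by norm_num)]
    simp
end

section
/- Let u⁺, u⁻ ∈ ℝ, ν = (ν_t, ν_x) a unit vector in ℝ², and define the pure jump ψ(t,x) := u⁻ if (t,x)·ν < 0 and u⁺ if (t,x)·ν > 0. Let Δ : ℝ × ℝ → [0,∞) with Δ(v,v) = 0 for all v and Δ symmetric. Then for any 0 < |h| ≤ r: 2r·|ν_x|·Δ(u⁺,u⁻) ≤ (2/|h|)·∬_{B_r} Δ(ψ(t,x+h), ψ(t,x)) dx dt, where B_r is the open disc of radius r centered at the origin. -/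
/-!
The two values of `ψ` at `(t, x)` and `(t, x + h)` differ exactly when `(t, x) · ν` lies in the
half-open interval between `0` and `-h ν_x`, so the integrand is `Δ(u⁺, u⁻)` times the indicator
of a slab of width `|h ν_x| ≤ r` bounded by the jump line. In coordinates along `ν` and `ν⊥`
(a linear isometry, hence volume preserving) the disc contains the rectangle
`[a/√2, b/√2) × (-r/√2, r/√2)` for that slab `[a, b)`, whose area is exactly `r (b - a)`.
-/

open MeasureTheory Set

noncomputable def normalFrame (νt νx : ℝ) : (ℝ × ℝ) →ₗ[ℝ] ℝ × ℝ where
  toFun w := (w.1 * νt + w.2 * νx, w.1 * νx - w.2 * νt)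
  map_add' a b := by ext <;> simp <;> ring
  map_smul' c a := by ext <;> simp <;> ring

theorem normalFrame_apply (νt νx : ℝ) (w : ℝ × ℝ) :
    normalFrame νt νx w = (w.1 * νt + w.2 * νx, w.1 * νx - w.2 * νt) := rfl

theorem det_normalFrame (νt νx : ℝ) :
    LinearMap.det (normalFrame νt νx) = -(νt ^ 2 + νx ^ 2) := by
  rw [← LinearMap.det_toMatrix (Module.Basis.finTwoProd ℝ), Matrix.det_fin_two]
  simp [LinearMap.toMatrix_apply, normalFrame_apply]
  ring

theorem volume_preimage_normalFrame {νt νx : ℝ} (hν : νt ^ 2 + νx ^ 2 = 1)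
    (s : Set (ℝ × ℝ)) : volume (normalFrame νt νx ⁻¹' s) = volume s := by
  have hdet : LinearMap.det (normalFrame νt νx) = -1 := by rw [det_normalFrame, hν]
  rw [Measure.addHaar_preimage_linearMap _ (by rw [hdet]; norm_num), hdet]
  simp

theorem normalFrame_sq_add_sq {νt νx : ℝ} (hν : νt ^ 2 + νx ^ 2 = 1) (w : ℝ × ℝ) :
    (normalFrame νt νx w).1 ^ 2 + (normalFrame νt νx w).2 ^ 2 = w.1 ^ 2 + w.2 ^ 2 := by
  simp only [normalFrame_apply]
  linear_combination (w.1 ^ 2 + w.2 ^ 2) * hν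

def slab (νt νx a b : ℝ) : Set (ℝ × ℝ) := {w | w.1 * νt + w.2 * νx ∈ Ico a b}

theorem measurableSet_slab (νt νx a b : ℝ) : MeasurableSet (slab νt νx a b) :=
  measurableSet_preimage (by fun_prop) measurableSet_Ico

theorem ofReal_mul_le_volume_disc_inter_slab {νt νx : ℝ} (hν : νt ^ 2 + νx ^ 2 = 1)
    {a b r : ℝ} (hra : -r ≤ a) (ha : a ≤ 0) (hb : 0 ≤ b) (hbr : b ≤ r) :
    ENNReal.ofReal (r * (b - a)) ≤
      volume ({w : ℝ × ℝ | w.1 ^ 2 + w.2 ^ 2 < r ^ 2} ∩ slab νt νx a b) := by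
  set k := Real.sqrt 2
  have hk2 : k ^ 2 = 2 := Real.sq_sqrt (by norm_num)
  have hk1 : 1 ≤ k := by nlinarith [Real.sqrt_nonneg 2]
  have hrk : (r / k) ^ 2 = r ^ 2 / 2 := by rw [div_pow, hk2]
  have hab : a / k ≤ b / k := div_le_div_of_nonneg_right (by linarith) (by positivity)
  have hrect : normalFrame νt νx ⁻¹' (Ico (a / k) (b / k) ×ˢ Ioo (-r / k) (r / k)) ⊆
      {w : ℝ × ℝ | w.1 ^ 2 + w.2 ^ 2 < r ^ 2} ∩ slab νt νx a b := by
    rintro w ⟨⟨hs₁, hs₂⟩, hq₁, hq₂⟩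
    have hra' : -r / k ≤ a / k := div_le_div_of_nonneg_right hra (by positivity)
    have hbr' : b / k ≤ r / k := div_le_div_of_nonneg_right hbr (by positivity)
    have hs : (normalFrame νt νx w).1 ^ 2 ≤ (r / k) ^ 2 :=
      sq_le_sq' (by rw [← neg_div]; linarith) (by linarith)
    have hq : (normalFrame νt νx w).2 ^ 2 < (r / k) ^ 2 :=
      sq_lt_sq' (by rw [← neg_div]; linarith) hq₂
    have hak : a ≤ a / k := by rw [le_div_iff₀ (by positivity)]; nlinarith
    have hbk : b / k ≤ b := div_le_self hb hk1
    refine ⟨?_, ?_, ?_⟩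
    · show w.1 ^ 2 + w.2 ^ 2 < r ^ 2
      rw [← normalFrame_sq_add_sq hν w]
      linarith
    · exact hak.trans hs₁
    · exact hs₂.trans_le hbk
  calc ENNReal.ofReal (r * (b - a))
      = volume (Ico (a / k) (b / k) ×ˢ Ioo (-r / k) (r / k)) := by
        rw [Measure.volume_eq_prod, Measure.prod_prod, Real.volume_Ico, Real.volume_Ioo,
          ← ENNReal.ofReal_mul (sub_nonneg.2 hab)]
        congr 1
        field_simp
        rw [hk2]
        ring
    _ = _ := (volume_preimage_normalFrame hν _).symm
    _ ≤ _ := measure_mono hrect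

theorem jump_cost_eq_indicator {α : Type*} (Δ : α → α → ℝ) (hΔsymm : ∀ v w, Δ v w = Δ w v)
    (hΔdiag : ∀ v, Δ v v = 0) (um up : α) (s k : ℝ) :
    Δ (if s + k < 0 then um else up) (if s < 0 then um else up) =
      (Ico (min 0 (-k)) (max 0 (-k))).indicator (fun _ => Δ up um) s := by
  simp only [min_def, max_def, indicator_apply, mem_Ico]
  split_ifs <;>
    first | exact hΔdiag _ | exact hΔsymm _ _ | rfl | (exfalso; simp_all <;> linarith)

theorem setIntegral_jump_cost {α : Type*} (Δ : α → α → ℝ) (hΔsymm : ∀ v w, Δ v w = Δ w v)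
    (hΔdiag : ∀ v, Δ v v = 0) (um up : α) (νt νx h : ℝ) {s : Set (ℝ × ℝ)}
    (hs : MeasurableSet s) :
    ∫ w in s, Δ (if w.1 * νt + (w.2 + h) * νx < 0 then um else up)
        (if w.1 * νt + w.2 * νx < 0 then um else up) =
      volume.real (s ∩ slab νt νx (min 0 (-(h * νx))) (max 0 (-(h * νx)))) * Δ up um := by
  rw [← smul_eq_mul, ← setIntegral_const, ← setIntegral_indicator (measurableSet_slab _ _ _ _)]
  refine setIntegral_congr_fun hs fun w _ => ?_
  rw [show w.1 * νt + (w.2 + h) * νx = w.1 * νt + w.2 * νx + h * νx by ring,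
    jump_cost_eq_indicator Δ hΔsymm hΔdiag]
  rfl

theorem volume_disc_ne_top (r : ℝ) : volume {w : ℝ × ℝ | w.1 ^ 2 + w.2 ^ 2 < r ^ 2} ≠ ⊤ := by
  refine ne_top_of_le_ne_top measure_ball_lt_top.ne (measure_mono (t := Metric.ball 0 |r|) ?_)
  intro w (hw : w.1 ^ 2 + w.2 ^ 2 < r ^ 2)
  rw [mem_ball_zero_iff, Prod.norm_def, max_lt_iff, Real.norm_eq_abs, Real.norm_eq_abs,
    ← sq_lt_sq, ← sq_lt_sq]
  exact ⟨by nlinarith [sq_nonneg w.2], by nlinarith [sq_nonneg w.1]⟩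

/-- Elementary estimate for a pure jump: for the two-valued function `ψ` jumping from `u⁻` to
`u⁺` across the line through the origin with unit normal `ν`, and any symmetric nonnegative
cost `Δ` vanishing on the diagonal, for `0 < |h| ≤ r`,
`2r·|ν_x|·Δ(u⁺,u⁻) ≤ (2/|h|)·∬_{B_r} Δ(ψ(t,x+h), ψ(t,x)) dx dt`. -/
theorem stmt17 (up um : ℝ) (νt νx : ℝ) (hν : νt ^ 2 + νx ^ 2 = 1)
    (Δ : ℝ → ℝ → ℝ) (hΔ0 : ∀ v w, 0 ≤ Δ v w) (hΔsymm : ∀ v w, Δ v w = Δ w v)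
    (hΔdiag : ∀ v, Δ v v = 0)
    (h r : ℝ) (hh : h ≠ 0) (hhr : |h| ≤ r) :
    2 * r * |νx| * Δ up um
      ≤ (2 / |h|) *
        ∫ w in {w : ℝ × ℝ | w.1 ^ 2 + w.2 ^ 2 < r ^ 2},
          Δ (if w.1 * νt + (w.2 + h) * νx < 0 then um else up)
            (if w.1 * νt + w.2 * νx < 0 then um else up) := by
  have hr : 0 ≤ r := (abs_nonneg h).trans hhr
  have hνx : |νx| ≤ 1 := by nlinarith [sq_abs νx, abs_nonneg νx]
  have hhνx : |h * νx| ≤ r := by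
    rw [abs_mul]; exact (mul_le_of_le_one_right (abs_nonneg h) hνx).trans hhr
  have hwidth : max 0 (-(h * νx)) - min 0 (-(h * νx)) = |h| * |νx| := by
    rw [max_sub_min_eq_abs, sub_zero, abs_neg, abs_mul]
  have hvolume := ofReal_mul_le_volume_disc_inter_slab hν (a := min 0 (-(h * νx)))
    (b := max 0 (-(h * νx))) (le_min (by linarith) (by linarith [le_abs_self (h * νx)]))
    (min_le_left _ _) (le_max_left _ _) (max_le hr (by linarith [neg_le_abs (h * νx)]))
  rw [hwidth, ENNReal.ofReal_le_iff_le_toReal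
    (ne_top_of_le_ne_top (volume_disc_ne_top r) (measure_mono inter_subset_left))] at hvolume
  rw [setIntegral_jump_cost Δ hΔsymm hΔdiag um up νt νx h
    (measurableSet_lt (by fun_prop) (by fun_prop))]
  calc 2 * r * |νx| * Δ up um = (2 / |h|) * (r * (|h| * |νx|) * Δ up um) := by
        field_simp
    _ ≤ _ := by gcongr; exacts [hΔ0 _ _, hvolume]
end

section
/- Let a(v) = |v|^{β+1} with β ≥ 1, which is C¹ and convex. Then there exists c > 0 (depending on β) such that for all u₁, u₂ ∈ ℝ: Δ(u₁,u₂) := (1/2) ∫_{u₁}^{u₂} ∫_{u₁}^{u₂} |a'(v) − a'(w)| dv dw ≥ c·|u₁ − u₂|^{β+2}. -/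
open MeasureTheory intervalIntegral

lemma superadd (β : ℝ) (hβ : 1 ≤ β) {x y : ℝ} (hx : 0 ≤ x) (hy : 0 ≤ y) :
    x ^ β + y ^ β ≤ (x + y) ^ β := by
  have h := NNReal.add_rpow_le_rpow_add x.toNNReal y.toNNReal hβ
  have h' := NNReal.coe_le_coe.2 h
  rw [NNReal.coe_rpow, NNReal.coe_add, NNReal.coe_rpow, NNReal.coe_rpow, NNReal.coe_add] at h'
  simpa [Real.coe_toNNReal x hx, Real.coe_toNNReal y hy] using h'

lemma id_nonneg (β : ℝ) (hβ : 1 ≤ β) {x : ℝ} (hx : 0 ≤ x) :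
    |x| ^ (β - 1) * x = x ^ β := by
  rcases eq_or_lt_of_le hx with h | h
  · rw [← h]
    simp [Real.zero_rpow (by linarith : β ≠ 0)]
  · rw [abs_of_pos h, Real.rpow_sub_one h.ne']
    field_simp

lemma key_half (β : ℝ) (hβ : 1 ≤ β) {v w : ℝ} (hwv : w ≤ v) (hs : 0 ≤ v + w) :
    2 ^ (-β) * (v - w) ^ β ≤ |v| ^ (β - 1) * v - |w| ^ (β - 1) * w := by
  have hv2 : (v - w) / 2 ≤ v := by linarith
  have hv0 : (0:ℝ) ≤ v := by linarith
  have hvw0 : (0:ℝ) ≤ v - w := by linarith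
  have h2 : (2:ℝ) ^ (-β) * (v - w) ^ β = ((v - w) / 2) ^ β := by
    rw [Real.div_rpow hvw0 (by norm_num), Real.rpow_neg (by norm_num)]
    ring
  rcases le_or_gt 0 w with hw | hw
  · rw [id_nonneg β hβ hv0, id_nonneg β hβ hw]
    have h1 : (v - w) ^ β + w ^ β ≤ v ^ β := by
      have := superadd β hβ hvw0 hw
      simpa using this
    have h3 : (2:ℝ) ^ (-β) ≤ 1 := by
      calc (2:ℝ) ^ (-β) ≤ 2 ^ (0:ℝ) :=
            Real.rpow_le_rpow_of_exponent_le (by norm_num) (by linarith)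
        _ = 1 := Real.rpow_zero 2
    calc 2 ^ (-β) * (v - w) ^ β ≤ 1 * (v - w) ^ β := by
          apply mul_le_mul_of_nonneg_right h3 (Real.rpow_nonneg hvw0 β)
      _ = (v - w) ^ β := one_mul _
      _ ≤ v ^ β - w ^ β := by linarith
  · have hw' : |w| ^ (β - 1) * w = -((-w) ^ β) := by
      have := id_nonneg β hβ (le_of_lt (neg_pos.2 hw))
      rw [abs_neg] at this
      linarith [this]
    rw [id_nonneg β hβ hv0, hw', h2]
    have : ((v - w) / 2) ^ β ≤ v ^ β :=
      Real.rpow_le_rpow (by linarith) hv2 (by linarith)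
    have hnw : (0:ℝ) ≤ (-w) ^ β := Real.rpow_nonneg (by linarith) β
    linarith

lemma key (β : ℝ) (hβ : 1 ≤ β) {v w : ℝ} (hwv : w ≤ v) :
    2 ^ (-β) * (v - w) ^ β ≤ |v| ^ (β - 1) * v - |w| ^ (β - 1) * w := by
  rcases le_or_gt 0 (v + w) with hs | hs
  · exact key_half β hβ hwv hs
  · have h := key_half β hβ (by linarith : -v ≤ -w) (by linarith)
    rw [abs_neg, abs_neg] at h
    have hvw : -w - -v = v - w := by ring
    rw [hvw] at h
    linarith

lemma cont_g (β : ℝ) (hβ : 1 ≤ β) : Continuous fun v : ℝ => |v| ^ (β - 1) * v := by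
  rcases eq_or_lt_of_le hβ with h | h
  · simp only [← h, sub_self, Real.rpow_zero, one_mul]
    exact continuous_id
  · exact (continuous_abs.rpow_const fun x => Or.inr (by linarith)).mul continuous_id

lemma cont_inner (β : ℝ) (hβ : 1 ≤ β) (v : ℝ) :
    Continuous fun w : ℝ => |(β + 1) * |v| ^ (β - 1) * v - (β + 1) * |w| ^ (β - 1) * w| := by
  have h : (fun w : ℝ => |(β + 1) * |v| ^ (β - 1) * v - (β + 1) * |w| ^ (β - 1) * w|)
      = fun w : ℝ => |(β + 1) * |v| ^ (β - 1) * v - (β + 1) * (|w| ^ (β - 1) * w)| := by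
    funext w; ring_nf
  rw [h]
  exact (continuous_const.sub (continuous_const.mul (cont_g β hβ))).abs

lemma comp_rpow (β : ℝ) (hβ : 1 ≤ β) {a v : ℝ} (hav : a ≤ v) :
    ∫ w in a..v, (v - w) ^ β = (v - a) ^ (β + 1) / (β + 1) := by
  have h := intervalIntegral.integral_comp_sub_left (a := a) (b := v)
    (fun t : ℝ => t ^ β) v
  rw [sub_self] at h
  rw [h, integral_rpow (Or.inl (by linarith))]
  rw [Real.zero_rpow (by linarith : β + 1 ≠ 0)]
  ring

lemma joint_cont (β : ℝ) (hβ : 1 ≤ β) :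
    Continuous (Function.uncurry fun v w : ℝ =>
      |(β + 1) * |v| ^ (β - 1) * v - (β + 1) * |w| ^ (β - 1) * w|) := by
  have h : (Function.uncurry fun v w : ℝ =>
        |(β + 1) * |v| ^ (β - 1) * v - (β + 1) * |w| ^ (β - 1) * w|)
      = fun p : ℝ × ℝ =>
        |(β + 1) * (|p.1| ^ (β - 1) * p.1) - (β + 1) * (|p.2| ^ (β - 1) * p.2)| := by
    funext p; simp [Function.uncurry]; ring_nf
  rw [h]
  exact ((continuous_const.mul ((cont_g β hβ).comp continuous_fst)).sub
    (continuous_const.mul ((cont_g β hβ).comp continuous_snd))).abs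

lemma inner_bound (β : ℝ) (hβ : 1 ≤ β) {a b v : ℝ} (hab : a ≤ b) (hv : v ∈ Set.Icc a b) :
    2 ^ (-β) * (v - a) ^ (β + 1)
      ≤ ∫ w in a..b, |(β + 1) * |v| ^ (β - 1) * v - (β + 1) * |w| ^ (β - 1) * w| := by
  set f : ℝ → ℝ := fun w => |(β + 1) * |v| ^ (β - 1) * v - (β + 1) * |w| ^ (β - 1) * w| with hf
  have hcont := cont_inner β hβ v
  have hint1 : IntervalIntegrable f volume a v := hcont.intervalIntegrable a v
  have hint2 : IntervalIntegrable f volume v b := hcont.intervalIntegrable v b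
  have hsplit : ∫ w in a..b, f w = (∫ w in a..v, f w) + ∫ w in v..b, f w :=
    (integral_add_adjacent_intervals hint1 hint2).symm
  have hpos : 0 ≤ ∫ w in v..b, f w :=
    intervalIntegral.integral_nonneg hv.2 fun w _ => abs_nonneg _
  have hcont2 : Continuous fun w : ℝ => (β + 1) * 2 ^ (-β) * (v - w) ^ β :=
    continuous_const.mul ((continuous_const.sub continuous_id).rpow_const
      fun x => Or.inr (by linarith))
  have hmono : ∫ w in a..v, (β + 1) * 2 ^ (-β) * (v - w) ^ β ≤ ∫ w in a..v, f w := by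
    apply intervalIntegral.integral_mono_on hv.1 (hcont2.intervalIntegrable a v)
      (hcont.intervalIntegrable a v)
    intro w hw
    have hk := key β hβ hw.2
    calc (β + 1) * 2 ^ (-β) * (v - w) ^ β
        = (β + 1) * (2 ^ (-β) * (v - w) ^ β) := by ring
      _ ≤ (β + 1) * |(|v| ^ (β - 1) * v - |w| ^ (β - 1) * w)| :=
          mul_le_mul_of_nonneg_left (hk.trans (le_abs_self _)) (by linarith)
      _ = |(β + 1) * |v| ^ (β - 1) * v - (β + 1) * |w| ^ (β - 1) * w| := by
          rw [show (β + 1) * |v| ^ (β - 1) * v - (β + 1) * |w| ^ (β - 1) * w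
              = (β + 1) * (|v| ^ (β - 1) * v - |w| ^ (β - 1) * w) by ring]
          rw [abs_mul, abs_of_pos (by linarith : (0:ℝ) < β + 1)]
  have hcomp : ∫ w in a..v, (β + 1) * 2 ^ (-β) * (v - w) ^ β
      = 2 ^ (-β) * (v - a) ^ (β + 1) := by
    rw [intervalIntegral.integral_const_mul, comp_rpow β hβ hv.1]
    field_simp
  rw [hcomp] at hmono
  show 2 ^ (-β) * (v - a) ^ (β + 1) ≤ ∫ w in a..b, f w
  rw [hsplit]
  linarith

lemma main_bound (β : ℝ) (hβ : 1 ≤ β) {a b : ℝ} (hab : a ≤ b) :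
    2 ^ (-β) / (2 * (β + 2)) * (b - a) ^ (β + 2)
      ≤ (1 / 2) * ∫ v in a..b, ∫ w in a..b,
          |(β + 1) * |v| ^ (β - 1) * v - (β + 1) * |w| ^ (β - 1) * w| := by
  have hF : Continuous fun v : ℝ => ∫ w in a..b,
      |(β + 1) * |v| ^ (β - 1) * v - (β + 1) * |w| ^ (β - 1) * w| :=
    intervalIntegral.continuous_parametric_intervalIntegral_of_continuous'
      (joint_cont β hβ) a b
  have hcontG : Continuous fun v : ℝ => 2 ^ (-β) * (v - a) ^ (β + 1) :=
    continuous_const.mul ((continuous_id.sub continuous_const).rpow_const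
      fun x => Or.inr (by linarith))
  have hmono : ∫ v in a..b, 2 ^ (-β) * (v - a) ^ (β + 1)
      ≤ ∫ v in a..b, ∫ w in a..b,
          |(β + 1) * |v| ^ (β - 1) * v - (β + 1) * |w| ^ (β - 1) * w| := by
    apply intervalIntegral.integral_mono_on hab (hcontG.intervalIntegrable a b)
      (hF.intervalIntegrable a b)
    intro v hv
    exact inner_bound β hβ hab hv
  have hcomp : ∫ v in a..b, 2 ^ (-β) * (v - a) ^ (β + 1)
      = 2 ^ (-β) * ((b - a) ^ (β + 2) / (β + 2)) := by
    rw [intervalIntegral.integral_const_mul]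
    have h := intervalIntegral.integral_comp_sub_right (a := a) (b := b)
      (fun t : ℝ => t ^ (β + 1)) a
    rw [sub_self] at h
    rw [h, integral_rpow (Or.inl (by linarith))]
    rw [Real.zero_rpow (by linarith : β + 1 + 1 ≠ 0),
      show β + 1 + 1 = β + 2 by ring]
    ring
  rw [hcomp] at hmono
  have h2 : (β:ℝ) + 2 ≠ 0 := by linarith
  have heq : 2 ^ (-β) / (2 * (β + 2)) * (b - a) ^ (β + 2)
      = (1/2) * (2 ^ (-β) * ((b - a) ^ (β + 2) / (β + 2))) := by
    field_simp
  rw [heq]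
  have hfin := mul_le_mul_of_nonneg_left hmono (by norm_num : (0:ℝ) ≤ 1/2)
  exact hfin

/-- For the flux `a(v) = |v|^{β+1}` with `β ≥ 1` (so `a'(v) = (β+1)|v|^{β−1}v`), the
Golse–Perthame cost satisfies `Δ(u₁,u₂) ≥ c·|u₁−u₂|^{β+2}` for some `c > 0`. -/
theorem stmt18 (β : ℝ) (hβ : 1 ≤ β) :
    ∃ c > 0, ∀ u₁ u₂ : ℝ,
      c * |u₁ - u₂| ^ (β + 2)
        ≤ (1 / 2) * ∫ v in u₁..u₂, ∫ w in u₁..u₂,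
            |(β + 1) * |v| ^ (β - 1) * v - (β + 1) * |w| ^ (β - 1) * w| := by
  refine ⟨2 ^ (-β) / (2 * (β + 2)), by positivity, ?_⟩
  intro u₁ u₂
  rcases le_total u₁ u₂ with h | h
  · have hm := main_bound β hβ h
    rwa [abs_sub_comm, abs_of_nonneg (by linarith : (0:ℝ) ≤ u₂ - u₁)]
  · have hm := main_bound β hβ h
    rw [abs_of_nonneg (by linarith : (0:ℝ) ≤ u₁ - u₂)]
    have hswap : (∫ v in u₁..u₂, ∫ w in u₁..u₂,
          |(β + 1) * |v| ^ (β - 1) * v - (β + 1) * |w| ^ (β - 1) * w|)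
        = ∫ v in u₂..u₁, ∫ w in u₂..u₁,
          |(β + 1) * |v| ^ (β - 1) * v - (β + 1) * |w| ^ (β - 1) * w| := by
      rw [intervalIntegral.integral_symm u₂ u₁]
      simp_rw [intervalIntegral.integral_symm u₂ u₁
        (f := fun w => |(β + 1) * |_| ^ (β - 1) * _ - (β + 1) * |w| ^ (β - 1) * w|)]
      rw [intervalIntegral.integral_neg, neg_neg]
    rw [hswap]
    exact hm
end
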